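/- arXiv:2508.06748 — 2 statements merged into one kernel-verified Lean document; each statement's English description precedes it below -/
import Mathlib

section
/- For every t ∈ (0,1), γ(t) = max{f₋(t), f₊(t)}; that is, the supremum over x ∈ ℝ of Φ_t^+(x) − Φ(x) is attained and equals the larger of the two values f₋(t) and f₊(t). -/
open Real Set MeasureTheory

/-- The standard Gaussian CDF. -/
noncomputable def Phi (x : ℝ) : ℝ := ∫ u in Set.Iic x, Real.exp (-u ^ 2 / 2) / Real.sqrt (2 * Real.pi)

/-- The deformed Gaussian CDF `Φ_t^+(x) = Φ(x / (1 − sgn(x)·t))`. -/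
noncomputable def PhiPlus (t x : ℝ) : ℝ := Phi (x / (1 - Real.sign x * t))

/-- `γ(t) = sup_x (Φ_t^+(x) − Φ(x))`. -/
noncomputable def gammaFn (t : ℝ) : ℝ := ⨆ x : ℝ, (PhiPlus t x - Phi x)

/-- The negative critical point `x₋(t)`. -/
noncomputable def xMinus (t : ℝ) : ℝ :=
  -Real.sqrt ((2 * (1 + t) ^ 2 / (2 + t)) * (Real.log (1 + t) / t))

/-- The positive critical point `x₊(t)`. -/
noncomputable def xPlus (t : ℝ) : ℝ :=
  Real.sqrt ((2 * (1 - t) ^ 2 / (2 - t)) * (Real.log (1 - t) / (-t)))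

/-- `f₋(t) = Φ(x₋(t)/(1+t)) − Φ(x₋(t))`. -/
noncomputable def fMinus (t : ℝ) : ℝ := Phi (xMinus t / (1 + t)) - Phi (xMinus t)

/-- `f₊(t) = Φ(x₊(t)/(1−t)) − Φ(x₊(t))`. -/
noncomputable def fPlus (t : ℝ) : ℝ := Phi (xPlus t / (1 - t)) - Phi (xPlus t)

set_option linter.unusedSectionVars false

noncomputable def phiD (x : ℝ) : ℝ := Real.exp (-x ^ 2 / 2) / Real.sqrt (2 * Real.pi)

lemma continuous_phiD : Continuous phiD := by
  unfold phiD; fun_prop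

lemma integrable_phiD : Integrable phiD := by
  have h : Integrable (fun x : ℝ => Real.exp (-(1/2) * x ^ 2)) := integrable_exp_neg_mul_sq (by norm_num)
  have := h.div_const (Real.sqrt (2 * Real.pi))
  convert this using 2 with x
  unfold phiD
  ring_nf

lemma hasDerivAt_Phi (x : ℝ) : HasDerivAt Phi (phiD x) x := by
  have heq : Phi = fun y => (∫ u in Set.Iic (0:ℝ), phiD u) + ∫ u in (0:ℝ)..y, phiD u := by
    funext y
    have := intervalIntegral.integral_Iic_sub_Iic (integrable_phiD.integrableOn (s := Iic 0)) (integrable_phiD.integrableOn (s := Iic y))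
    unfold Phi phiD at *
    linarith
  rw [heq]
  have h2 : HasDerivAt (fun y => ∫ u in (0:ℝ)..y, phiD u) (phiD x) x :=
    intervalIntegral.integral_hasDerivAt_right integrable_phiD.intervalIntegrable
      continuous_phiD.measurable.stronglyMeasurable.stronglyMeasurableAtFilter
      continuous_phiD.continuousAt
  simpa using h2

lemma continuous_Phi : Continuous Phi :=
  continuous_iff_continuousAt.2 fun x => (hasDerivAt_Phi x).continuousAt

lemma sqrt_two_pi_pos : 0 < Real.sqrt (2 * Real.pi) :=
  Real.sqrt_pos.2 (by positivity)

/-- Comparison reduced to exponents -/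
lemma phiD_comp (c x : ℝ) (hc : 0 < c) (h : -x^2/2 ≤ -(x/c)^2/2 - Real.log c) :
    phiD x ≤ phiD (x/c) * (1/c) := by
  unfold phiD
  have hs := sqrt_two_pi_pos
  have hce : c = Real.exp (Real.log c) := (Real.exp_log hc).symm
  have key : Real.exp (-x^2/2) ≤ Real.exp (-(x/c)^2/2) / c := by
    rw [hce, ← Real.exp_sub]
    exact Real.exp_le_exp.2 (by rw [← hce]; linarith)
  calc Real.exp (-x^2/2) / Real.sqrt (2*Real.pi) ≤ (Real.exp (-(x/c)^2/2) / c) / Real.sqrt (2*Real.pi) := by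
        gcongr
    _ = Real.exp (-(x/c)^2/2) / Real.sqrt (2*Real.pi) * (1/c) := by ring

lemma phiD_comp' (c x : ℝ) (hc : 0 < c) (h : -(x/c)^2/2 - Real.log c ≤ -x^2/2) :
    phiD (x/c) * (1/c) ≤ phiD x := by
  unfold phiD
  have hs := sqrt_two_pi_pos
  have hce : c = Real.exp (Real.log c) := (Real.exp_log hc).symm
  have key : Real.exp (-(x/c)^2/2) / c ≤ Real.exp (-x^2/2) := by
    rw [hce, ← Real.exp_sub]
    exact Real.exp_le_exp.2 (by rw [← hce]; linarith)
  calc Real.exp (-(x/c)^2/2) / Real.sqrt (2*Real.pi) * (1/c)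
      = (Real.exp (-(x/c)^2/2) / c) / Real.sqrt (2*Real.pi) := by ring
    _ ≤ Real.exp (-x^2/2) / Real.sqrt (2*Real.pi) := by gcongr

section
variable {t : ℝ} (ht : t ∈ Set.Ioo (0:ℝ) 1)

-- abbreviations
noncomputable def Am (t : ℝ) : ℝ := (2 * (1 + t) ^ 2 / (2 + t)) * (Real.log (1 + t) / t)
noncomputable def Ap (t : ℝ) : ℝ := (2 * (1 - t) ^ 2 / (2 - t)) * (Real.log (1 - t) / (-t))

include ht

lemma Am_pos : 0 < Am t := by
  obtain ⟨h0, h1⟩ := ht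
  have hL : 0 < Real.log (1+t) := Real.log_pos (by linarith)
  unfold Am; positivity

lemma Ap_pos : 0 < Ap t := by
  obtain ⟨h0, h1⟩ := ht
  have hL : Real.log (1-t) < 0 := Real.log_neg (by linarith) (by linarith)
  have h2 : 0 < Real.log (1-t) / (-t) := div_pos_of_neg_of_neg hL (by linarith)
  have h3 : 0 < 2 * (1-t)^2 / (2-t) := div_pos (by nlinarith) (by linarith)
  exact mul_pos h3 h2

lemma exponent_minus (x : ℝ) (hx : Am t ≤ x^2) :
    -x^2/2 ≤ -(x/(1+t))^2/2 - Real.log (1+t) := by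
  obtain ⟨h0, h1⟩ := ht
  set L := Real.log (1+t) with hLdef
  have h1t : (0:ℝ) < 1 + t := by linarith
  have h2t : (0:ℝ) < 2 + t := by linarith
  have hA : Am t * (t * (2+t)) = 2*(1+t)^2*L := by
    unfold Am; field_simp; ring_nf; try exact Or.inl trivial
    rfl
  have key : 2*(1+t)^2*L ≤ x^2*(t*(2+t)) := by
    nlinarith [mul_nonneg (sub_nonneg.2 hx) (le_of_lt (mul_pos h0 h2t))]
  have e : (-(x/(1+t))^2/2 - L) - (-x^2/2) = (x^2*(t*(2+t)) - 2*(1+t)^2*L)/(2*(1+t)^2) := by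
    field_simp
    ring
  have : 0 ≤ (x^2*(t*(2+t)) - 2*(1+t)^2*L)/(2*(1+t)^2) :=
    div_nonneg (by linarith) (by positivity)
  linarith

lemma exponent_minus' (x : ℝ) (hx : x^2 ≤ Am t) :
    -(x/(1+t))^2/2 - Real.log (1+t) ≤ -x^2/2 := by
  obtain ⟨h0, h1⟩ := ht
  set L := Real.log (1+t) with hLdef
  have h1t : (0:ℝ) < 1 + t := by linarith
  have h2t : (0:ℝ) < 2 + t := by linarith
  have hA : Am t * (t * (2+t)) = 2*(1+t)^2*L := by
    unfold Am; field_simp; ring_nf; try exact Or.inl trivial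
    rfl
  have key : x^2*(t*(2+t)) ≤ 2*(1+t)^2*L := by
    nlinarith [mul_nonneg (sub_nonneg.2 hx) (le_of_lt (mul_pos h0 h2t))]
  have e : (-(x/(1+t))^2/2 - L) - (-x^2/2) = (x^2*(t*(2+t)) - 2*(1+t)^2*L)/(2*(1+t)^2) := by
    field_simp
    ring
  have : (x^2*(t*(2+t)) - 2*(1+t)^2*L)/(2*(1+t)^2) ≤ 0 :=
    div_nonpos_of_nonpos_of_nonneg (by linarith) (by positivity)
  linarith

lemma exponent_plus (x : ℝ) (hx : x^2 ≤ Ap t) :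
    -x^2/2 ≤ -(x/(1-t))^2/2 - Real.log (1-t) := by
  obtain ⟨h0, h1⟩ := ht
  set L := Real.log (1-t) with hLdef
  have h1t : (0:ℝ) < 1 - t := by linarith
  have h2t : (0:ℝ) < 2 - t := by linarith
  have hA : Ap t * (t * (2-t)) = -(2*(1-t)^2*L) := by
    unfold Ap; field_simp; ring_nf; try exact Or.inl trivial
    rfl
  have key : x^2*(t*(2-t)) ≤ -(2*(1-t)^2*L) := by
    nlinarith [mul_nonneg (sub_nonneg.2 hx) (le_of_lt (mul_pos h0 h2t))]
  have e : (-(x/(1-t))^2/2 - L) - (-x^2/2) = (-(x^2*(t*(2-t))) - 2*(1-t)^2*L)/(2*(1-t)^2) := by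
    field_simp
    ring
  have : 0 ≤ (-(x^2*(t*(2-t))) - 2*(1-t)^2*L)/(2*(1-t)^2) :=
    div_nonneg (by linarith) (by positivity)
  linarith

lemma exponent_plus' (x : ℝ) (hx : Ap t ≤ x^2) :
    -(x/(1-t))^2/2 - Real.log (1-t) ≤ -x^2/2 := by
  obtain ⟨h0, h1⟩ := ht
  set L := Real.log (1-t) with hLdef
  have h1t : (0:ℝ) < 1 - t := by linarith
  have h2t : (0:ℝ) < 2 - t := by linarith
  have hA : Ap t * (t * (2-t)) = -(2*(1-t)^2*L) := by
    unfold Ap; field_simp; ring_nf; try exact Or.inl trivial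
    rfl
  have key : -(2*(1-t)^2*L) ≤ x^2*(t*(2-t)) := by
    nlinarith [mul_nonneg (sub_nonneg.2 hx) (le_of_lt (mul_pos h0 h2t))]
  have e : (-(x/(1-t))^2/2 - L) - (-x^2/2) = (-(x^2*(t*(2-t))) - 2*(1-t)^2*L)/(2*(1-t)^2) := by
    field_simp
    ring
  have : (-(x^2*(t*(2-t))) - 2*(1-t)^2*L)/(2*(1-t)^2) ≤ 0 :=
    div_nonpos_of_nonpos_of_nonneg (by linarith) (by positivity)
  linarith

lemma hasDerivAt_Hm (x : ℝ) :
    HasDerivAt (fun y => Phi (y/(1+t)) - Phi y) (phiD (x/(1+t)) * (1/(1+t)) - phiD x) x := by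
  have h1 : HasDerivAt (fun y : ℝ => y/(1+t)) (1/(1+t)) x := by
    simpa using (hasDerivAt_id x).div_const (1+t)
  exact ((hasDerivAt_Phi (x/(1+t))).comp x h1).sub (hasDerivAt_Phi x)

lemma hasDerivAt_Hp (x : ℝ) :
    HasDerivAt (fun y => Phi (y/(1-t)) - Phi y) (phiD (x/(1-t)) * (1/(1-t)) - phiD x) x := by
  have h1 : HasDerivAt (fun y : ℝ => y/(1-t)) (1/(1-t)) x := by
    simpa using (hasDerivAt_id x).div_const (1-t)
  exact ((hasDerivAt_Phi (x/(1-t))).comp x h1).sub (hasDerivAt_Phi x)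

lemma contHm : Continuous (fun y => Phi (y/(1+t)) - Phi y) :=
  (continuous_Phi.comp (continuous_id.div_const _)).sub continuous_Phi

lemma contHp : Continuous (fun y => Phi (y/(1-t)) - Phi y) :=
  (continuous_Phi.comp (continuous_id.div_const _)).sub continuous_Phi

lemma mono_neg : MonotoneOn (fun y => Phi (y/(1+t)) - Phi y) (Iic (-Real.sqrt (Am t))) := by
  apply monotoneOn_of_deriv_nonneg (convex_Iic _) (contHm ht).continuousOn
  · intro x _; exact (hasDerivAt_Hm ht x).differentiableAt.differentiableWithinAt
  · intro x hx
    rw [(hasDerivAt_Hm ht x).deriv]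
    rw [interior_Iic, mem_Iio] at hx
    have hx2 : Am t ≤ x^2 := by
      nlinarith [Real.sq_sqrt (le_of_lt (Am_pos ht)), Real.sqrt_nonneg (Am t)]
    have := phiD_comp (1+t) x (by linarith [ht.1]) (exponent_minus ht x hx2)
    linarith

lemma anti_neg : AntitoneOn (fun y => Phi (y/(1+t)) - Phi y) (Icc (-Real.sqrt (Am t)) 0) := by
  apply antitoneOn_of_deriv_nonpos (convex_Icc _ _) (contHm ht).continuousOn
  · intro x _; exact (hasDerivAt_Hm ht x).differentiableAt.differentiableWithinAt
  · intro x hx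
    rw [(hasDerivAt_Hm ht x).deriv]
    rw [interior_Icc, mem_Ioo] at hx
    have hx2 : x^2 ≤ Am t := by
      nlinarith [Real.sq_sqrt (le_of_lt (Am_pos ht)), Real.sqrt_nonneg (Am t)]
    have := phiD_comp' (1+t) x (by linarith [ht.1]) (exponent_minus' ht x hx2)
    linarith

lemma mono_pos : MonotoneOn (fun y => Phi (y/(1-t)) - Phi y) (Icc 0 (Real.sqrt (Ap t))) := by
  apply monotoneOn_of_deriv_nonneg (convex_Icc _ _) (contHp ht).continuousOn
  · intro x _; exact (hasDerivAt_Hp ht x).differentiableAt.differentiableWithinAt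
  · intro x hx
    rw [(hasDerivAt_Hp ht x).deriv]
    rw [interior_Icc, mem_Ioo] at hx
    have hx2 : x^2 ≤ Ap t := by
      nlinarith [Real.sq_sqrt (le_of_lt (Ap_pos ht)), Real.sqrt_nonneg (Ap t)]
    have := phiD_comp (1-t) x (by linarith [ht.2]) (exponent_plus ht x hx2)
    linarith

lemma anti_pos : AntitoneOn (fun y => Phi (y/(1-t)) - Phi y) (Ici (Real.sqrt (Ap t))) := by
  apply antitoneOn_of_deriv_nonpos (convex_Ici _) (contHp ht).continuousOn
  · intro x _; exact (hasDerivAt_Hp ht x).differentiableAt.differentiableWithinAt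
  · intro x hx
    rw [(hasDerivAt_Hp ht x).deriv]
    rw [interior_Ici, mem_Ioi] at hx
    have hx2 : Ap t ≤ x^2 := by
      nlinarith [Real.sq_sqrt (le_of_lt (Ap_pos ht)), Real.sqrt_nonneg (Ap t)]
    have := phiD_comp' (1-t) x (by linarith [ht.2]) (exponent_plus' ht x hx2)
    linarith

end

theorem gamma_eq_max (t : ℝ) (ht : t ∈ Set.Ioo (0 : ℝ) 1) :
    gammaFn t = max (fMinus t) (fPlus t) ∧
      ∃ x : ℝ, PhiPlus t x - Phi x = gammaFn t := by
  have h0 := ht.1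
  have h1 := ht.2
  have hxm_eq : xMinus t = -Real.sqrt (Am t) := rfl
  have hxp_eq : xPlus t = Real.sqrt (Ap t) := rfl
  have hxm_neg : xMinus t < 0 := by
    rw [hxm_eq]; simpa using Real.sqrt_pos.2 (Am_pos ht)
  have hxp_pos : 0 < xPlus t := Real.sqrt_pos.2 (Ap_pos ht)
  have gm : ∀ x : ℝ, x < 0 → PhiPlus t x - Phi x = Phi (x/(1+t)) - Phi x := by
    intro x hx
    unfold PhiPlus
    rw [Real.sign_of_neg hx, show (1:ℝ) - -1 * t = 1 + t by ring]
  have gp : ∀ x : ℝ, 0 < x → PhiPlus t x - Phi x = Phi (x/(1-t)) - Phi x := by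
    intro x hx
    unfold PhiPlus
    rw [Real.sign_of_pos hx, show (1:ℝ) - 1 * t = 1 - t by ring]
  have g0 : PhiPlus t 0 - Phi 0 = 0 := by
    unfold PhiPlus
    simp
  have hfm : fMinus t = Phi (xMinus t/(1+t)) - Phi (xMinus t) := rfl
  have hfp : fPlus t = Phi (xPlus t/(1-t)) - Phi (xPlus t) := rfl
  have hmem_xm : xMinus t ∈ Icc (-Real.sqrt (Am t)) (0:ℝ) := ⟨le_of_eq hxm_eq, hxm_neg.le⟩
  have hmem_0m : (0:ℝ) ∈ Icc (-Real.sqrt (Am t)) (0:ℝ) := ⟨by rw [← hxm_eq]; exact hxm_neg.le, le_rfl⟩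
  have hmem_0p : (0:ℝ) ∈ Icc (0:ℝ) (Real.sqrt (Ap t)) := ⟨le_rfl, by rw [← hxp_eq]; exact hxp_pos.le⟩
  have hmem_xp : xPlus t ∈ Icc (0:ℝ) (Real.sqrt (Ap t)) := ⟨hxp_pos.le, le_of_eq hxp_eq⟩
  have hf0m : 0 ≤ fMinus t := by
    have := anti_neg ht hmem_xm hmem_0m hxm_neg.le
    simp only [zero_div] at this
    rw [hfm, ← hxm_eq] at *
    simpa using this
  have hf0p : 0 ≤ fPlus t := by
    have := mono_pos ht hmem_0p hmem_xp hxp_pos.le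
    simp only [zero_div] at this
    rw [hfp, ← hxp_eq] at *
    simpa using this
  have bound : ∀ x : ℝ, PhiPlus t x - Phi x ≤ max (fMinus t) (fPlus t) := by
    intro x
    rcases lt_trichotomy x 0 with hx | hx | hx
    · rw [gm x hx]
      refine le_trans ?_ (le_max_left _ _)
      rw [hfm]
      rcases le_total x (xMinus t) with h | h
      · exact mono_neg ht (mem_Iic.2 (h.trans (le_of_eq hxm_eq))) (mem_Iic.2 (le_of_eq hxm_eq)) h
      · exact anti_neg ht hmem_xm ⟨(le_of_eq hxm_eq.symm).trans h, hx.le⟩ h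
    · rw [hx, g0]
      exact le_trans hf0m (le_max_left _ _)
    · rw [gp x hx]
      refine le_trans ?_ (le_max_right _ _)
      rw [hfp]
      rcases le_total x (xPlus t) with h | h
      · exact mono_pos ht ⟨hx.le, h.trans (le_of_eq hxp_eq)⟩ hmem_xp h
      · exact anti_pos ht (mem_Ici.2 (le_of_eq hxp_eq.symm)) (mem_Ici.2 ((le_of_eq hxp_eq.symm).trans h)) h
  have att_m : PhiPlus t (xMinus t) - Phi (xMinus t) = fMinus t := by
    rw [gm _ hxm_neg, hfm]
  have att_p : PhiPlus t (xPlus t) - Phi (xPlus t) = fPlus t := by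
    rw [gp _ hxp_pos, hfp]
  have bdd : BddAbove (Set.range fun x => PhiPlus t x - Phi x) := by
    refine ⟨max (fMinus t) (fPlus t), ?_⟩
    rintro y ⟨x, rfl⟩
    exact bound x
  have hsup_le : gammaFn t ≤ max (fMinus t) (fPlus t) := ciSup_le bound
  have hm_le : fMinus t ≤ gammaFn t := att_m ▸ le_ciSup bdd (xMinus t)
  have hp_le : fPlus t ≤ gammaFn t := att_p ▸ le_ciSup bdd (xPlus t)
  have hmain : gammaFn t = max (fMinus t) (fPlus t) :=
    le_antisymm hsup_le (max_le hm_le hp_le)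
  refine ⟨hmain, ?_⟩
  rcases le_total (fPlus t) (fMinus t) with h | h
  · exact ⟨xMinus t, by rw [att_m, hmain, max_eq_left h]⟩
  · exact ⟨xPlus t, by rw [att_p, hmain, max_eq_right h]⟩
end

section
/- For every t ∈ (0,1), f₊(t) ≥ f₋(t), and consequently γ(t) = f₊(t). -/
open Real Set MeasureTheory intervalIntegral

/-! ### Auxiliary lemmas -/

/-- The Gaussian density. -/
noncomputable def gDen (u : ℝ) : ℝ := Real.exp (-u ^ 2 / 2) / Real.sqrt (2 * Real.pi)

lemma gDen_nonneg (u : ℝ) : 0 ≤ gDen u :=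
  div_nonneg (Real.exp_pos _).le (Real.sqrt_nonneg _)

lemma gDen_continuous : Continuous gDen :=
  (Real.continuous_exp.comp (by continuity)).div_const _

lemma gDen_integrable : Integrable gDen := by
  have h : Integrable (fun u : ℝ => Real.exp (-(1/2) * u ^ 2)) :=
    integrable_exp_neg_mul_sq (by norm_num)
  have h2 := h.div_const (Real.sqrt (2 * Real.pi))
  have : (fun u : ℝ => Real.exp (-(1/2) * u ^ 2) / Real.sqrt (2 * Real.pi)) = gDen := by
    funext u
    rw [gDen, show -u ^ 2 / 2 = -(1/2) * u ^ 2 by ring]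
  rwa [this] at h2

lemma gDen_even (u : ℝ) : gDen (-u) = gDen u := by
  simp [gDen]

lemma Phi_sub (a b : ℝ) : Phi b - Phi a = ∫ u in a..b, gDen u := by
  rw [Phi, Phi]
  exact integral_Iic_sub_Iic gDen_integrable.integrableOn gDen_integrable.integrableOn

lemma Phi_mono {a b : ℝ} (hab : a ≤ b) : Phi a ≤ Phi b := by
  have h := Phi_sub a b
  have h2 : 0 ≤ ∫ u in a..b, gDen u :=
    intervalIntegral.integral_nonneg hab (fun u _ => gDen_nonneg u)
  linarith

lemma Phi_reflect (a b : ℝ) : Phi b - Phi a = Phi (-a) - Phi (-b) := by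
  rw [Phi_sub a b, Phi_sub (-b) (-a)]
  have h : (∫ u in a..b, gDen (-u)) = ∫ u in (-b)..(-a), gDen u :=
    intervalIntegral.integral_comp_neg gDen
  rw [← h]
  simp only [gDen_even]

lemma xPlus_pos {t : ℝ} (ht0 : 0 < t) (ht1 : t < 1) : 0 < xPlus t := by
  apply Real.sqrt_pos.2
  have hlog : Real.log (1 - t) < 0 := Real.log_neg (by linarith) (by linarith)
  have h1 : 0 < 2 * (1 - t) ^ 2 / (2 - t) :=
    div_pos (mul_pos two_pos (pow_pos (by linarith) 2)) (by linarith)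
  have h2 : 0 < Real.log (1 - t) / (-t) :=
    div_pos_of_neg_of_neg hlog (by linarith)
  exact mul_pos h1 h2

lemma xPlus_sq {t : ℝ} (ht0 : 0 < t) (ht1 : t < 1) :
    xPlus t ^ 2 * (t * (2 - t)) = 2 * (1 - t) ^ 2 * (-Real.log (1 - t)) := by
  have hR : 0 ≤ (2 * (1 - t) ^ 2 / (2 - t)) * (Real.log (1 - t) / (-t)) := by
    have hlog : Real.log (1 - t) < 0 := Real.log_neg (by linarith) (by linarith)
    have h1 : 0 < 2 * (1 - t) ^ 2 / (2 - t) :=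
      div_pos (mul_pos two_pos (pow_pos (by linarith) 2)) (by linarith)
    have h2 : 0 < Real.log (1 - t) / (-t) := div_pos_of_neg_of_neg hlog (by linarith)
    exact (mul_pos h1 h2).le
  rw [xPlus, Real.sq_sqrt hR]
  have ht0' : t ≠ 0 := ne_of_gt ht0
  have h2t : (2 : ℝ) - t ≠ 0 := by linarith
  rw [div_mul_div_comm, div_mul_eq_mul_div, div_eq_iff (by
    intro h
    rcases mul_eq_zero.1 h with h1 | h2
    · exact h2t h1
    · exact ht0' (by linarith [neg_eq_zero.1 h2]))]
  ring

/-- Pointwise sign of the integrand `gDen(v/(1-t))/(1-t) - gDen v`. -/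
lemma gDen_ratio {t v : ℝ} (ht0 : 0 < t) (ht1 : t < 1) :
    (v ^ 2 ≤ xPlus t ^ 2 → gDen v ≤ gDen (v / (1 - t)) / (1 - t)) ∧
    (xPlus t ^ 2 ≤ v ^ 2 → gDen (v / (1 - t)) / (1 - t) ≤ gDen v) := by
  have hs : (0 : ℝ) < 1 - t := by linarith
  have hS : (0 : ℝ) < Real.sqrt (2 * Real.pi) := Real.sqrt_pos.2 (by positivity)
  have hX2 := xPlus_sq ht0 ht1
  have hw : (v / (1 - t)) ^ 2 * (1 - t) ^ 2 = v ^ 2 := by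
    field_simp
  constructor
  · intro hv
    have hmul : (0 : ℝ) ≤ (xPlus t ^ 2 - v ^ 2) * (t * (2 - t)) :=
      mul_nonneg (by linarith) (by nlinarith)
    have h6 : ((v / (1 - t)) ^ 2 - v ^ 2 + 2 * Real.log (1 - t)) * (1 - t) ^ 2 ≤ 0 := by
      nlinarith [hw, hX2, hmul]
    have h7 : (v / (1 - t)) ^ 2 - v ^ 2 + 2 * Real.log (1 - t) ≤ 0 := by
      by_contra h
      push_neg at h
      nlinarith [pow_pos hs 2]
    have hkey : -v ^ 2 / 2 + Real.log (1 - t) ≤ -(v / (1 - t)) ^ 2 / 2 := by linarith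
    have hexp : Real.exp (-v ^ 2 / 2) * (1 - t) ≤ Real.exp (-(v / (1 - t)) ^ 2 / 2) := by
      rw [show Real.exp (-v ^ 2 / 2) * (1 - t)
            = Real.exp (-v ^ 2 / 2 + Real.log (1 - t)) by
          rw [Real.exp_add, Real.exp_log hs]]
      exact Real.exp_le_exp.2 hkey
    rw [gDen, gDen, div_div, div_le_div_iff₀ hS (mul_pos hS hs)]
    nlinarith [hexp, hS.le]
  · intro hv
    have hmul : (0 : ℝ) ≤ (v ^ 2 - xPlus t ^ 2) * (t * (2 - t)) :=
      mul_nonneg (by linarith) (by nlinarith)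
    have h6 : (0 : ℝ) ≤ ((v / (1 - t)) ^ 2 - v ^ 2 + 2 * Real.log (1 - t)) * (1 - t) ^ 2 := by
      nlinarith [hw, hX2, hmul]
    have h7 : (0 : ℝ) ≤ (v / (1 - t)) ^ 2 - v ^ 2 + 2 * Real.log (1 - t) := by
      by_contra h
      push_neg at h
      nlinarith [pow_pos hs 2]
    have hkey : -(v / (1 - t)) ^ 2 / 2 ≤ -v ^ 2 / 2 + Real.log (1 - t) := by linarith
    have hexp : Real.exp (-(v / (1 - t)) ^ 2 / 2) ≤ Real.exp (-v ^ 2 / 2) * (1 - t) := by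
      rw [show Real.exp (-v ^ 2 / 2) * (1 - t)
            = Real.exp (-v ^ 2 / 2 + Real.log (1 - t)) by
          rw [Real.exp_add, Real.exp_log hs]]
      exact Real.exp_le_exp.2 hkey
    rw [gDen, gDen, div_div, div_le_div_iff₀ (mul_pos hS hs) hS]
    nlinarith [hexp, hS.le]

/-- Key bound: for nonnegative `x`, `Φ(x/(1−t)) − Φ(x) ≤ f₊(t)`. -/
lemma key_bound {t : ℝ} (ht0 : 0 < t) (ht1 : t < 1) {x : ℝ} (hx : 0 ≤ x) :
    Phi (x / (1 - t)) - Phi x ≤ fPlus t := by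
  have hs : (0 : ℝ) < 1 - t := by linarith
  set X := xPlus t with hXdef
  have hX0 : 0 < X := xPlus_pos ht0 ht1
  set k : ℝ → ℝ := fun v => gDen (v / (1 - t)) / (1 - t) - gDen v with hk
  have hcontk : Continuous k :=
    ((gDen_continuous.comp (continuous_id.div_const _)).div_const _).sub gDen_continuous
  have h1 : (∫ u in x / (1 - t)..X / (1 - t), gDen u)
      = ∫ v in x..X, gDen (v / (1 - t)) / (1 - t) := by
    rw [intervalIntegral.integral_div, intervalIntegral.integral_comp_div _ (ne_of_gt hs),
      smul_eq_mul]
    field_simp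
  have h2 : fPlus t - (Phi (x / (1 - t)) - Phi x) = ∫ v in x..X, k v := by
    have e1 : fPlus t - (Phi (x / (1 - t)) - Phi x)
        = (Phi (X / (1 - t)) - Phi (x / (1 - t))) - (Phi X - Phi x) := by
      rw [fPlus]; ring
    rw [e1, Phi_sub, Phi_sub, h1, ← intervalIntegral.integral_sub]
    · exact (((gDen_continuous.comp (continuous_id.div_const _)).div_const
        _).intervalIntegrable _ _)
    · exact gDen_continuous.intervalIntegrable _ _
  have h3 : 0 ≤ ∫ v in x..X, k v := by
    rcases le_total x X with hxX | hXx
    · apply intervalIntegral.integral_nonneg hxX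
      intro u hu
      have hu2 : u ^ 2 ≤ X ^ 2 := by nlinarith [hu.1, hu.2, hx]
      have := (gDen_ratio (v := u) ht0 ht1).1 hu2
      simpa [hk] using sub_nonneg.2 this
    · have h4 : 0 ≤ ∫ u in X..x, -k u := by
        apply intervalIntegral.integral_nonneg hXx
        intro u hu
        have hu2 : X ^ 2 ≤ u ^ 2 := by nlinarith [hu.1, hu.2, hX0]
        have := (gDen_ratio (v := u) ht0 ht1).2 hu2
        simpa [hk] using sub_nonneg.2 this
      rw [intervalIntegral.integral_neg] at h4
      rw [intervalIntegral.integral_symm]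
      linarith
  linarith [h2, h3]

theorem fPlus_ge_fMinus (t : ℝ) (ht : t ∈ Set.Ioo (0 : ℝ) 1) :
    fPlus t ≥ fMinus t ∧ gammaFn t = fPlus t := by
  obtain ⟨ht0, ht1⟩ := ht
  have hs : (0 : ℝ) < 1 - t := by linarith
  have hX0 : 0 < xPlus t := xPlus_pos ht0 ht1
  -- global bound
  have bound : ∀ x : ℝ, PhiPlus t x - Phi x ≤ fPlus t := by
    intro x
    rcases lt_trichotomy x 0 with hx | hx | hx
    · -- negative case: reflect
      rw [PhiPlus, Real.sign_of_neg hx]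
      have h1t : (0 : ℝ) < 1 + t := by linarith
      have hrw : (1 : ℝ) - (-1) * t = 1 + t := by ring
      rw [hrw]
      set y : ℝ := -x / (1 + t) with hy
      have hy0 : 0 ≤ y := div_nonneg (by linarith) (by linarith)
      have hyx : -(x / (1 + t)) = y := by rw [hy]; ring
      have hxy : -x = y * (1 + t) := by rw [hy]; field_simp
      have hrefl : Phi (x / (1 + t)) - Phi x = Phi (-x) - Phi (-(x / (1 + t))) :=
        Phi_reflect x (x / (1 + t))
      rw [hrefl, hyx, hxy]
      have hmono : Phi (y * (1 + t)) ≤ Phi (y / (1 - t)) := by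
        apply Phi_mono
        rw [le_div_iff₀ hs]
        nlinarith [sq_nonneg t]
      have := key_bound ht0 ht1 hy0
      linarith
    · -- zero case
      subst hx
      rw [PhiPlus, Real.sign_zero]
      simp only [zero_mul, sub_zero, zero_div, sub_self]
      have : Phi (xPlus t) ≤ Phi (xPlus t / (1 - t)) := by
        apply Phi_mono
        rw [le_div_iff₀ hs]
        nlinarith
      rw [fPlus]; linarith
    · -- positive case
      rw [PhiPlus, Real.sign_of_pos hx, one_mul]
      exact key_bound ht0 ht1 hx.le
  -- value at xPlus
  have heqX : PhiPlus t (xPlus t) - Phi (xPlus t) = fPlus t := by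
    rw [PhiPlus, Real.sign_of_pos hX0, one_mul, fPlus]
  have hbdd : BddAbove (Set.range fun x : ℝ => PhiPlus t x - Phi x) := by
    refine ⟨fPlus t, ?_⟩
    rintro _ ⟨x, rfl⟩
    exact bound x
  constructor
  · -- fPlus ≥ fMinus
    have hXm : xMinus t < 0 := by
      rw [xMinus, neg_lt, neg_zero]
      apply Real.sqrt_pos.2
      have hlog : 0 < Real.log (1 + t) := Real.log_pos (by linarith)
      have h1 : 0 < 2 * (1 + t) ^ 2 / (2 + t) := by positivity
      have h2 : 0 < Real.log (1 + t) / t := div_pos hlog ht0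
      exact mul_pos h1 h2
    have : fMinus t = PhiPlus t (xMinus t) - Phi (xMinus t) := by
      rw [PhiPlus, Real.sign_of_neg hXm, fMinus,
        show (1 : ℝ) - (-1) * t = 1 + t by ring]
    rw [this]
    exact bound (xMinus t)
  · -- gammaFn = fPlus
    rw [gammaFn]
    apply le_antisymm (ciSup_le bound)
    calc fPlus t = PhiPlus t (xPlus t) - Phi (xPlus t) := heqX.symm
      _ ≤ ⨆ x : ℝ, (PhiPlus t x - Phi x) := le_ciSup hbdd (xPlus t)
end
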